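/- Let $C_*$ be a chain complex of finite-dimensional real vector spaces, vanishing above degree $N$, equipped with two inner products $\iota_1$ and $\iota_2$ such that $\langle u, w \rangle_2 = c_n \langle u, w \rangle_1$ for all $u, w \in C_n$, where $c_n > 0$. Then the analytic torsions satisfy $T(C_*, \iota_2) = T(C_*, \iota_1) \prod_{n=0}^N c_n^{\frac{(-1)^n}{2}(\dim C_n - \dim H_n(C_*))}$. -/

import Mathlib

open LinearMap Module

/-- The Hodge-Laplace operator `Δₙ = ∂ₙ* ∂ₙ + ∂ₙ₊₁ ∂ₙ₊₁*`. -/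
noncomputable def hodgeLaplace (C : ℕ → Type) [∀ n, NormedAddCommGroup (C n)]
    [∀ n, InnerProductSpace ℝ (C n)] [∀ n, FiniteDimensional ℝ (C n)]
    (d : ∀ n, C n →ₗ[ℝ] C (n - 1)) (n : ℕ) : C n →ₗ[ℝ] C n :=
  (adjoint (d n)).comp (d n) +
    (show C n →ₗ[ℝ] C n from (d (n + 1)).comp (adjoint (d (n + 1))))

/-- The product of the positive eigenvalues (with multiplicity) of a
self-adjoint positive semi-definite operator `T`, computed as
`det(T + P_{ker T})` where `P_{ker T}` is the orthogonal projection onto the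
kernel; this is the regularized determinant `exp(-ζ_T'(0))`. -/
noncomputable def detPos {E : Type} [NormedAddCommGroup E]
    [InnerProductSpace ℝ E] [FiniteDimensional ℝ E] (T : E →ₗ[ℝ] E) : ℝ :=
  LinearMap.det (T + ((LinearMap.ker T).subtypeL.comp
    (Submodule.orthogonalProjectionOnto (LinearMap.ker T))).toLinearMap)

/-- The analytic torsion of a chain complex of finite-dimensional real inner
product spaces vanishing above degree `N`:
`log T = (1/2) ∑ (-1)^n n ζₙ'(0) = -(1/2) ∑ (-1)^n n ∑_{λ>0} log λ`, i.e.
`T = ∏ₙ (det'Δₙ)^{(-1)^{n+1} n / 2}`. -/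
noncomputable def torsion (C : ℕ → Type) [∀ n, NormedAddCommGroup (C n)]
    [∀ n, InnerProductSpace ℝ (C n)] [∀ n, FiniteDimensional ℝ (C n)]
    (d : ∀ n, C n →ₗ[ℝ] C (n - 1)) (N : ℕ) : ℝ :=
  ∏ n ∈ Finset.range (N + 1),
    detPos (hodgeLaplace C d n) ^ (((-1 : ℝ) ^ (n + 1) * n) / 2)

open scoped RealInnerProductSpace

/-!
The chain isomorphism identifies `d'ₙ` with `φ dₙ φ⁻¹`, and since `φₙ` scales inner products by
`cₙ`, the adjoint of `d'ₙ` is `(cₙ₋₁ / cₙ) φ dₙ* φ⁻¹`. Hence `Δ'ₙ` is conjugate to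
`(cₙ₋₁ / cₙ) dₙ* dₙ + (cₙ / cₙ₊₁) dₙ₊₁ dₙ₊₁*`. The two summands annihilate each other, so the
regularized determinant `det'` of the sum is the product of those of the summands, and scaling a
symmetric operator of rank `r` by `γ` multiplies `det'` by `γ ^ r`. With `rₙ = rank dₙ` this gives
`det' Δ'ₙ = (cₙ₋₁ / cₙ) ^ rₙ (cₙ / cₙ₊₁) ^ rₙ₊₁ det' Δₙ`; in the alternating product defining the
torsion these factors telescope to `∏ cₙ ^ ((-1)ⁿ (rₙ + rₙ₊₁) / 2)`, and
`rₙ + rₙ₊₁ = dim Cₙ - dim Hₙ`.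
-/

theorem LinearMap.det_eq_prod_of_apply_basis_eq_smul {R M ι : Type*} [CommRing R]
    [AddCommGroup M] [Module R M] [Fintype ι] [DecidableEq ι] (b : Basis ι R M)
    {T : M →ₗ[R] M} (μ : ι → R) (h : ∀ i, T (b i) = μ i • b i) : T.det = ∏ i, μ i := by
  have : toMatrix b b T = Matrix.diagonal μ := by
    ext i j
    simp only [toMatrix_apply, h, map_smul, Basis.repr_self, Finsupp.smul_apply,
      Finsupp.single_apply, Matrix.diagonal_apply, smul_eq_mul, mul_ite, mul_one, mul_zero]
    grind
  rw [← det_toMatrix b, this, Matrix.det_diagonal]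

section Spectral

variable {E : Type} [NormedAddCommGroup E] [InnerProductSpace ℝ E] [FiniteDimensional ℝ E]
  {T : E →ₗ[ℝ] E}

theorem detPos_eq_det_add_starProjection (T : E →ₗ[ℝ] E) :
    detPos T = (T + (ker T).starProjection.toLinearMap).det := rfl

theorem LinearMap.IsSymmetric.orthogonal_ker (hT : T.IsSymmetric) : (ker T)ᗮ = range T := by
  rw [← hT.orthogonal_range, Submodule.orthogonal_orthogonal]

theorem LinearMap.IsSymmetric.sub_starProjection_ker_mem_range (hT : T.IsSymmetric) (x : E) :
    x - (ker T).starProjection x ∈ range T :=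
  hT.orthogonal_ker ▸ (ker T).sub_starProjection_mem_orthogonal x

theorem LinearMap.IsSymmetric.starProjection_ker_of_apply_eq_smul (hT : T.IsSymmetric) {v : E}
    {μ : ℝ} (hv : T v = μ • v) : (ker T).starProjection v = if μ = 0 then v else 0 := by
  split_ifs with hμ
  · exact Submodule.starProjection_eq_self_iff.2 (by simp [hv, hμ])
  · refine (Submodule.starProjection_apply_eq_zero_iff _).2 (hT.orthogonal_ker ▸ ⟨μ⁻¹ • v, ?_⟩)
    rw [map_smul, hv, smul_smul, inv_mul_cancel₀ hμ, one_smul]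

theorem LinearMap.IsSymmetric.detPos_smul_eq_prod (hT : T.IsSymmetric) {γ : ℝ} (hγ : γ ≠ 0) :
    detPos (γ • T) = ∏ i, if hT.eigenvalues rfl i = 0 then 1 else γ * hT.eigenvalues rfl i := by
  rw [detPos_eq_det_add_starProjection, ker_smul T γ hγ]
  refine det_eq_prod_of_apply_basis_eq_smul (hT.eigenvectorBasis rfl).toBasis _ fun i => ?_
  have hv := hT.apply_eigenvectorBasis rfl i
  simp only [RCLike.ofReal_real_eq_id, _root_.id] at hv
  simp only [OrthonormalBasis.coe_toBasis, LinearMap.add_apply, LinearMap.smul_apply,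
    ContinuousLinearMap.coe_coe, hT.starProjection_ker_of_apply_eq_smul hv, hv, smul_smul]
  split_ifs with h <;> simp [h]

theorem LinearMap.IsSymmetric.finrank_range_eq_card_eigenvalues_ne_zero (hT : T.IsSymmetric) :
    finrank ℝ (range T) = Finset.card {i | hT.eigenvalues rfl i ≠ 0} := by
  have hker := hT.card_filter_eigenvalues_eq rfl 0
  rw [Module.End.eigenspace_zero] at hker
  have := Finset.card_filter_add_card_filter_not (s := Finset.univ)
    (p := fun i => hT.eigenvalues rfl i = 0)
  have := T.finrank_range_add_finrank_ker
  simp only [Finset.card_univ, Fintype.card_fin, ne_eq, RCLike.ofReal_real_eq_id, id_eq] at *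
  omega

theorem LinearMap.IsSymmetric.detPos_smul (hT : T.IsSymmetric) {γ : ℝ} (hγ : γ ≠ 0) :
    detPos (γ • T) = γ ^ finrank ℝ (range T) * detPos T := by
  have h1 := hT.detPos_smul_eq_prod one_ne_zero
  rw [one_smul] at h1
  simp only [hT.detPos_smul_eq_prod hγ, h1, Finset.prod_ite, one_mul, Finset.prod_const_one,
    Finset.prod_mul_distrib, Finset.prod_const, hT.finrank_range_eq_card_eigenvalues_ne_zero]

theorem LinearMap.IsPositive.detPos_pos (hT : T.IsPositive) : 0 < detPos T := by
  have h1 := hT.isSymmetric.detPos_smul_eq_prod one_ne_zero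
  rw [one_smul] at h1
  rw [h1]
  refine Finset.prod_pos fun i _ => ?_
  split_ifs with h
  · exact one_pos
  · rw [one_mul]
    exact (hT.nonneg_eigenvalues rfl i).lt_of_ne' h

end Spectral

section Conj

variable {E E' : Type} [NormedAddCommGroup E] [InnerProductSpace ℝ E] [FiniteDimensional ℝ E]
  [NormedAddCommGroup E'] [InnerProductSpace ℝ E'] [FiniteDimensional ℝ E']

/- For symmetric `T` the projection onto `ker T` is the one along `range T`; any conjugation
transports kernels and ranges, so no compatibility of `φ` with the inner products is needed. -/
theorem LinearMap.IsSymmetric.detPos_conj {T : E →ₗ[ℝ] E} (hT : T.IsSymmetric) (φ : E ≃ₗ[ℝ] E')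
    (hS : (φ.toLinearMap ∘ₗ T ∘ₗ φ.symm.toLinearMap).IsSymmetric) :
    detPos (φ.toLinearMap ∘ₗ T ∘ₗ φ.symm.toLinearMap) = detPos T := by
  set S := φ.toLinearMap ∘ₗ T ∘ₗ φ.symm.toLinearMap
  have hP : ((ker S).starProjection : E' →ₗ[ℝ] E')
      = φ.toLinearMap ∘ₗ ((ker T).starProjection : E →ₗ[ℝ] E) ∘ₗ φ.symm.toLinearMap := by
    ext x
    refine Submodule.eq_starProjection_of_mem_orthogonal ?_ ?_
    · simpa [S] using mem_ker.1 ((ker T).starProjection_apply_mem (φ.symm x))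
    · obtain ⟨z, hz⟩ := hT.sub_starProjection_ker_mem_range (φ.symm x)
      rw [hS.orthogonal_ker]
      refine ⟨φ z, ?_⟩
      simp [S, hz]
  rw [detPos_eq_det_add_starProjection, detPos_eq_det_add_starProjection, hP, ← det_conj _ φ]
  congr 1
  ext x
  simp [S]

end Conj

section Split

variable {E : Type} [NormedAddCommGroup E] [InnerProductSpace ℝ E] {A B : E →ₗ[ℝ] E}

theorem LinearMap.IsSymmetric.ker_add_of_comp_eq_zero (hA : A.IsSymmetric) (hAB : A ∘ₗ B = 0) :
    ker (A + B) = ker A ⊓ ker B := by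
  refine le_antisymm (fun x hx => ?_) (fun x hx => by simp_all)
  have hABx : A (B x) = 0 := congr($hAB x)
  have hAAx : A (A x) = 0 := by
    simpa [hABx] using congr(A $(mem_ker.1 hx))
  have hAx : A x = 0 := by
    rw [← inner_self_eq_zero (𝕜 := ℝ), hA, hAAx, inner_zero_right]
  have hBx : B x = 0 := by simpa [hAx] using mem_ker.1 hx
  exact ⟨hAx, hBx⟩

variable [FiniteDimensional ℝ E]

theorem LinearMap.IsSymmetric.comp_eq_zero_symm (hA : A.IsSymmetric) (hB : B.IsSymmetric)
    (hAB : A ∘ₗ B = 0) : B ∘ₗ A = 0 := by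
  simpa [hA.adjoint_eq, hB.adjoint_eq] using congr(adjoint $hAB)

theorem LinearMap.IsSymmetric.starProjection_ker_add_of_comp_eq_zero (hA : A.IsSymmetric)
    (hB : B.IsSymmetric) (hAB : A ∘ₗ B = 0) (x : E) :
    (ker (A + B)).starProjection x = (ker A).starProjection ((ker B).starProjection x) := by
  set P := (ker A).starProjection
  set Q := (ker B).starProjection
  have hBA : B ∘ₗ A = 0 := hA.comp_eq_zero_symm hB hAB
  rw [hA.ker_add_of_comp_eq_zero hAB]
  refine Submodule.eq_starProjection_of_mem_orthogonal' (z := (x - Q x) + (Q x - P (Q x)))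
    ⟨(ker A).starProjection_apply_mem _, ?_⟩ (Submodule.add_mem _ ?_ ?_) (by abel)
  · obtain ⟨y, hy⟩ := hA.sub_starProjection_ker_mem_range (Q x)
    have : P (Q x) = Q x - A y := by rw [hy]; abel
    rw [this]
    exact Submodule.sub_mem _ ((ker B).starProjection_apply_mem x) congr($hBA y)
  · exact Submodule.orthogonal_le inf_le_right ((ker B).sub_starProjection_mem_orthogonal x)
  · exact Submodule.orthogonal_le inf_le_left ((ker A).sub_starProjection_mem_orthogonal _)

theorem LinearMap.IsSymmetric.detPos_add_of_comp_eq_zero (hA : A.IsSymmetric)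
    (hB : B.IsSymmetric) (hAB : A ∘ₗ B = 0) : detPos (A + B) = detPos A * detPos B := by
  have hABx (x : E) : A (B x) = 0 := congr($hAB x)
  have hAQ (x : E) : A ((ker B).starProjection x) = A x := by
    obtain ⟨y, hy⟩ := hB.sub_starProjection_ker_mem_range x
    have : A (x - (ker B).starProjection x) = 0 := by rw [← hy]; exact hABx y
    rwa [map_sub, sub_eq_zero, eq_comm] at this
  have hPB (x : E) : (ker A).starProjection (B x) = B x :=
    Submodule.starProjection_eq_self_iff.2 (hABx x)
  rw [detPos_eq_det_add_starProjection, detPos_eq_det_add_starProjection,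
    detPos_eq_det_add_starProjection, ← det_comp]
  congr 1
  ext x
  simp only [add_apply, comp_apply, ContinuousLinearMap.coe_coe, map_add,
    hA.starProjection_ker_add_of_comp_eq_zero hB hAB, hAQ, hPB, hABx]
  abel

end Split

section Adjoint

variable {E F G E' F' : Type}
  [NormedAddCommGroup E] [InnerProductSpace ℝ E] [FiniteDimensional ℝ E]
  [NormedAddCommGroup F] [InnerProductSpace ℝ F] [FiniteDimensional ℝ F]
  [NormedAddCommGroup G] [InnerProductSpace ℝ G] [FiniteDimensional ℝ G]
  [NormedAddCommGroup E'] [InnerProductSpace ℝ E'] [FiniteDimensional ℝ E']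
  [NormedAddCommGroup F'] [InnerProductSpace ℝ F'] [FiniteDimensional ℝ F']

theorem LinearMap.adjoint_conj_of_inner_map_map (f : E →ₗ[ℝ] F) (φE : E ≃ₗ[ℝ] E')
    (φF : F ≃ₗ[ℝ] F') {a b : ℝ} (ha : a ≠ 0) (hφE : ∀ u w, ⟪φE u, φE w⟫ = a * ⟪u, w⟫)
    (hφF : ∀ u w, ⟪φF u, φF w⟫ = b * ⟪u, w⟫) :
    adjoint (φF.toLinearMap ∘ₗ f ∘ₗ φE.symm.toLinearMap)
      = (b / a) • (φE.toLinearMap ∘ₗ adjoint f ∘ₗ φF.symm.toLinearMap) := by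
  refine ((eq_adjoint_iff _ _).2 fun x y => ?_).symm
  obtain ⟨x, rfl⟩ := φF.surjective x
  obtain ⟨y, rfl⟩ := φE.surjective y
  simp only [smul_apply, comp_apply, LinearEquiv.coe_coe, LinearEquiv.symm_apply_apply,
    real_inner_smul_left, hφE, hφF, adjoint_inner_left]
  field_simp

theorem LinearMap.detPos_smul_adjoint_comp_self_add_smul_comp_adjoint (f : E →ₗ[ℝ] F)
    (g : G →ₗ[ℝ] E) (hfg : f ∘ₗ g = 0) {a b : ℝ} (ha : a ≠ 0) (hb : b ≠ 0) :
    detPos (a • (adjoint f ∘ₗ f) + b • (g ∘ₗ adjoint g))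
      = a ^ finrank ℝ (range f) * b ^ finrank ℝ (range g)
        * detPos (adjoint f ∘ₗ f + g ∘ₗ adjoint g) := by
  have hA := isSymmetric_adjoint_comp_self f
  have hB := isSymmetric_self_comp_adjoint g
  have hAB : (adjoint f ∘ₗ f) ∘ₗ (g ∘ₗ adjoint g) = 0 := by
    rw [comp_assoc, ← comp_assoc (adjoint g) g f, hfg, zero_comp, comp_zero]
  have hAB' : (a • (adjoint f ∘ₗ f)) ∘ₗ (b • (g ∘ₗ adjoint g)) = 0 := by
    rw [smul_comp, comp_smul, hAB, smul_zero, smul_zero]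
  rw [(hA.smul (conj_trivial a)).detPos_add_of_comp_eq_zero (hB.smul (conj_trivial b)) hAB',
    hA.detPos_add_of_comp_eq_zero hB hAB, hA.detPos_smul ha, hB.detPos_smul hb,
    range_adjoint_comp_self, finrank_range_adjoint, range_self_comp_adjoint]
  ring

end Adjoint

section Complex

variable {C C' : ℕ → Type}
  [∀ n, NormedAddCommGroup (C n)] [∀ n, InnerProductSpace ℝ (C n)]
  [∀ n, FiniteDimensional ℝ (C n)]
  [∀ n, NormedAddCommGroup (C' n)] [∀ n, InnerProductSpace ℝ (C' n)]
  [∀ n, FiniteDimensional ℝ (C' n)]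
  {d : ∀ n, C n →ₗ[ℝ] C (n - 1)} {d' : ∀ n, C' n →ₗ[ℝ] C' (n - 1)}

theorem isPositive_hodgeLaplace (n : ℕ) : (hodgeLaplace C d n).IsPositive :=
  (isPositive_adjoint_comp_self (d n)).add
    (isPositive_self_comp_adjoint (d (n + 1) : C (n + 1) →ₗ[ℝ] C n))

theorem hodgeLaplace_eq_conj (φ : ∀ n, C n ≃ₗ[ℝ] C' n)
    (hchain : ∀ n, d' n ∘ₗ (φ n).toLinearMap = (φ (n - 1)).toLinearMap ∘ₗ d n)
    {c : ℕ → ℝ} (hc : ∀ n, c n ≠ 0) (hinner : ∀ n, ∀ u w : C n, ⟪φ n u, φ n w⟫ = c n * ⟪u, w⟫)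
    (n : ℕ) :
    hodgeLaplace C' d' n = (φ n).toLinearMap ∘ₗ
      ((c (n - 1) / c n) • (adjoint (d n) ∘ₗ d n)
        + (c n / c (n + 1)) • (show C n →ₗ[ℝ] C n from d (n + 1) ∘ₗ adjoint (d (n + 1))))
      ∘ₗ (φ n).symm.toLinearMap := by
  have hd' (k : ℕ) : d' k = (φ (k - 1)).toLinearMap ∘ₗ d k ∘ₗ (φ k).symm.toLinearMap := by
    ext x
    simpa using congr($(hchain k) ((φ k).symm x))
  have hadj (k : ℕ) : adjoint (d' k) = (c (k - 1) / c k)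
      • ((φ k).toLinearMap ∘ₗ adjoint (d k) ∘ₗ (φ (k - 1)).symm.toLinearMap) := by
    rw [hd']
    exact adjoint_conj_of_inner_map_map _ _ _ (hc k) (hinner k) (hinner (k - 1))
  ext x
  simp only [hodgeLaplace, hadj, LinearMap.add_apply, comp_apply, LinearMap.smul_apply]
  simp [hd']

theorem detPos_hodgeLaplace_eq (φ : ∀ n, C n ≃ₗ[ℝ] C' n)
    (hchain : ∀ n, d' n ∘ₗ (φ n).toLinearMap = (φ (n - 1)).toLinearMap ∘ₗ d n)
    (hd : ∀ n, d n ∘ₗ d (n + 1) = 0)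
    {c : ℕ → ℝ} (hc : ∀ n, c n ≠ 0) (hinner : ∀ n, ∀ u w : C n, ⟪φ n u, φ n w⟫ = c n * ⟪u, w⟫)
    (n : ℕ) :
    detPos (hodgeLaplace C' d' n)
      = (c (n - 1) / c n) ^ finrank ℝ (range (d n))
        * (c n / c (n + 1)) ^ finrank ℝ (range (d (n + 1)))
        * detPos (hodgeLaplace C d n) := by
  have hsymm := (isPositive_hodgeLaplace (d := d') n).isSymmetric
  rw [hodgeLaplace_eq_conj φ hchain hc hinner] at hsymm ⊢
  rw [IsSymmetric.detPos_conj _ (φ n) hsymm]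
  · exact detPos_smul_adjoint_comp_self_add_smul_comp_adjoint _ _ (hd n)
      (div_ne_zero (hc _) (hc _)) (div_ne_zero (hc _) (hc _))
  · exact ((isSymmetric_adjoint_comp_self _).smul (conj_trivial _)).add
      ((isSymmetric_self_comp_adjoint _).smul (conj_trivial _))

end Complex

theorem finrank_homology_add_finrank_range_add_finrank_range {K U V W : Type} [Field K]
    [AddCommGroup U] [Module K U] [AddCommGroup V] [Module K V] [AddCommGroup W] [Module K W]
    [FiniteDimensional K V] (f : V →ₗ[K] W) (g : U →ₗ[K] V) (hfg : f ∘ₗ g = 0) :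
    finrank K (ker f ⧸ (range g).comap (ker f).subtype) + finrank K (range f)
      + finrank K (range g) = finrank K V := by
  have hle : range g ≤ ker f := range_le_ker_iff.2 hfg
  rw [← (Submodule.comapSubtypeEquivOfLe hle).finrank_eq, ← f.finrank_range_add_finrank_ker,
    ← Submodule.finrank_quotient_add_finrank ((range g).comap (ker f).subtype)]
  ring

theorem sum_range_neg_one_pow_mul_telescope (r ℓ : ℕ → ℝ) (hr : r 0 = 0) (K : ℕ) :
    ∑ n ∈ Finset.range K, (-1) ^ n * n * (r n * (ℓ (n - 1) - ℓ n) + r (n + 1) * (ℓ n - ℓ (n + 1)))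
      = (-1) ^ K * r K * ((K - 1) * ℓ K - K * ℓ (K - 1))
        - ∑ n ∈ Finset.range K, (-1) ^ n * (r n + r (n + 1)) * ℓ n := by
  induction K with
  | zero => simp [hr]
  | succ K ih =>
    rw [Finset.sum_range_succ, ih, Finset.sum_range_succ, Nat.add_sub_cancel]
    push_cast
    ring

theorem prod_range_rpow_rescale (D c : ℕ → ℝ) (r : ℕ → ℕ) (N : ℕ) (hD : ∀ n, 0 < D n)
    (hc : ∀ n, 0 < c n) (hr0 : r 0 = 0) (hrN : r (N + 1) = 0) :
    ∏ n ∈ Finset.range (N + 1),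
        ((c (n - 1) / c n) ^ r n * (c n / c (n + 1)) ^ r (n + 1) * D n)
          ^ ((-1 : ℝ) ^ (n + 1) * n / 2)
      = (∏ n ∈ Finset.range (N + 1), D n ^ ((-1 : ℝ) ^ (n + 1) * n / 2))
        * ∏ n ∈ Finset.range (N + 1), c n ^ ((-1 : ℝ) ^ n / 2 * (r n + r (n + 1))) := by
  set ℓ := fun n => Real.log (c n)
  have hlog (n : ℕ) : Real.log ((c (n - 1) / c n) ^ r n * (c n / c (n + 1)) ^ r (n + 1) * D n)
      = r n * (ℓ (n - 1) - ℓ n) + r (n + 1) * (ℓ n - ℓ (n + 1)) + Real.log (D n) := by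
    have ha := div_pos (hc (n - 1)) (hc n)
    have hb := div_pos (hc n) (hc (n + 1))
    rw [Real.log_mul (mul_pos (pow_pos ha _) (pow_pos hb _)).ne' (hD n).ne',
      Real.log_mul (pow_pos ha _).ne' (pow_pos hb _).ne', Real.log_pow, Real.log_pow,
      Real.log_div (hc _).ne' (hc _).ne', Real.log_div (hc _).ne' (hc _).ne']
  have hpos (n : ℕ) : 0 < (c (n - 1) / c n) ^ r n * (c n / c (n + 1)) ^ r (n + 1) * D n :=
    mul_pos (mul_pos (pow_pos (div_pos (hc _) (hc _)) _) (pow_pos (div_pos (hc _) (hc _)) _)) (hD n)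
  have htel := sum_range_neg_one_pow_mul_telescope (fun n => (r n : ℝ)) ℓ (by simp [hr0]) (N + 1)
  simp only [hrN, Nat.cast_zero, mul_zero, zero_mul, zero_sub] at htel
  simp only [Real.rpow_def_of_pos (hpos _), Real.rpow_def_of_pos (hD _),
    Real.rpow_def_of_pos (hc _), ← Real.exp_sum, ← Real.exp_add, hlog]
  congr 1
  calc _ = ∑ n ∈ Finset.range (N + 1), Real.log (D n) * ((-1) ^ (n + 1) * n / 2)
        - 1 / 2 * ∑ n ∈ Finset.range (N + 1), (-1) ^ n * n
          * (r n * (ℓ (n - 1) - ℓ n) + r (n + 1) * (ℓ n - ℓ (n + 1))) := by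
        rw [Finset.mul_sum, ← Finset.sum_sub_distrib]
        exact Finset.sum_congr rfl fun n _ => by ring
    _ = _ := by
        rw [htel, mul_neg, sub_neg_eq_add, Finset.mul_sum]
        congr 1
        exact Finset.sum_congr rfl fun n _ => by ring

theorem stmt17_general (C C' : ℕ → Type)
    [∀ n, NormedAddCommGroup (C n)] [∀ n, InnerProductSpace ℝ (C n)]
    [∀ n, FiniteDimensional ℝ (C n)]
    [∀ n, NormedAddCommGroup (C' n)] [∀ n, InnerProductSpace ℝ (C' n)]
    [∀ n, FiniteDimensional ℝ (C' n)]
    (d : ∀ n, C n →ₗ[ℝ] C (n - 1)) (hd0 : d 0 = 0)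
    (hd : ∀ n, (d n).comp (d (n + 1)) = 0)
    (d' : ∀ n, C' n →ₗ[ℝ] C' (n - 1))
    (N : ℕ) (hvan : ∀ n, N < n → Subsingleton (C n))
    (φ : ∀ n, C n ≃ₗ[ℝ] C' n)
    (hchain : ∀ n, (d' n).comp (φ n).toLinearMap
      = ((φ (n - 1)).toLinearMap).comp (d n))
    (c : ℕ → ℝ) (hc : ∀ n, 0 < c n)
    (hinner : ∀ n, ∀ u w : C n, ⟪φ n u, φ n w⟫ = c n * ⟪u, w⟫) :
    torsion C' d' N
      = torsion C d N * ∏ n ∈ Finset.range (N + 1),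
          c n ^ (((-1 : ℝ) ^ n / 2) *
            ((finrank ℝ (C n) : ℝ) -
              (finrank ℝ (↥(LinearMap.ker (d n)) ⧸
                (Submodule.comap (LinearMap.ker (d n)).subtype
                  (LinearMap.range (d (n + 1))))) : ℝ))) := by
  have hrank_zero : finrank ℝ (range (d 0)) = 0 := by rw [hd0, range_zero, finrank_bot]
  have hrank_top : finrank ℝ (range (d (N + 1))) = 0 :=
    have := hvan (N + 1) N.lt_succ_self
    Nat.eq_zero_of_le_zero ((d (N + 1)).finrank_range_le.trans_eq finrank_zero_of_subsingleton)
  have hdim (n : ℕ) : (finrank ℝ (C n) : ℝ)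
      - finrank ℝ (ker (d n) ⧸ (range (d (n + 1))).comap (ker (d n)).subtype)
      = finrank ℝ (range (d n)) + finrank ℝ (range (d (n + 1))) := by
    rw [← finrank_homology_add_finrank_range_add_finrank_range (d n) (d (n + 1)) (hd n)]
    push_cast
    rw [add_assoc, add_sub_cancel_left]
    -- the two sides see `range (d (n + 1))` in `C n` and in `C (n + 1 - 1)`
    rfl
  simp only [torsion, detPos_hodgeLaplace_eq φ hchain hd (fun n => (hc n).ne') hinner, hdim]
  exact prod_range_rpow_rescale _ c (fun n => finrank ℝ (range (d n))) N
    (fun n => (isPositive_hodgeLaplace n).detPos_pos) hc hrank_zero hrank_top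

/-- if the inner products of two chain complexes are related by
`⟨u,w⟩₂ = cₙ ⟨u,w⟩₁` (via a chain isomorphism `φ` identifying the underlying
complexes), then the analytic torsions are related by
`T₂ = T₁ ∏ₙ cₙ^{((-1)^n/2)(dim Cₙ - dim Hₙ)}`. -/
theorem stmt17 (C C' : ℕ → Type)
    [∀ n, NormedAddCommGroup (C n)] [∀ n, InnerProductSpace ℝ (C n)]
    [∀ n, FiniteDimensional ℝ (C n)]
    [∀ n, NormedAddCommGroup (C' n)] [∀ n, InnerProductSpace ℝ (C' n)]
    [∀ n, FiniteDimensional ℝ (C' n)]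
    (d : ∀ n, C n →ₗ[ℝ] C (n - 1)) (hd0 : d 0 = 0)
    (hd : ∀ n, (d n).comp (d (n + 1)) = 0)
    (d' : ∀ n, C' n →ₗ[ℝ] C' (n - 1)) (hd0' : d' 0 = 0)
    (hd' : ∀ n, (d' n).comp (d' (n + 1)) = 0)
    (N : ℕ) (hvan : ∀ n, N < n → Subsingleton (C n))
    (hvan' : ∀ n, N < n → Subsingleton (C' n))
    (φ : ∀ n, C n ≃ₗ[ℝ] C' n)
    (hchain : ∀ n, (d' n).comp (φ n).toLinearMap
      = ((φ (n - 1)).toLinearMap).comp (d n))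
    (c : ℕ → ℝ) (hc : ∀ n, 0 < c n)
    (hinner : ∀ n, ∀ u w : C n, ⟪φ n u, φ n w⟫ = c n * ⟪u, w⟫) :
    torsion C' d' N
      = torsion C d N * ∏ n ∈ Finset.range (N + 1),
          c n ^ (((-1 : ℝ) ^ n / 2) *
            ((finrank ℝ (C n) : ℝ) -
              (finrank ℝ (↥(LinearMap.ker (d n)) ⧸
                (Submodule.comap (LinearMap.ker (d n)).subtype
                  (LinearMap.range (d (n + 1))))) : ℝ))) :=
  stmt17_general C C' d hd0 hd d' N hvan φ hchain c hc hinner
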